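/- arXiv:2207.12109 — 2 statements merged into one kernel-verified Lean document; each statement's English description precedes it below -/
import Mathlib

section
/- Let m ≥ 1 and x ≥ m be integers, μ > 0 and r > 0 reals with r ≠ m, λ = r·μ, and ρ = r/m. Then B_{m,x}(r) − B_{m,x+1}(r) > 0, m − r + r·B_m(r) ≠ 0, and, with C_m(r) = m·B_m(r)/(m − r + r·B_m(r)), one has (1/λ)·(L_{m,x+1}(r) − L_{m,x}(r)) / (B_{m,x}(r) − B_{m,x+1}(r)) = ρ·C_m(r)·(ρ^{x−m+1} − 1)/(m·μ·(ρ−1)^2) − (x+1−r)/(m·μ·(ρ−1)). -/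
/-- `a_j(r)` coefficients of the M/M/m/n queue. -/
noncomputable def aCoef (m j : ℕ) (r : ℝ) : ℝ :=
  if j ≤ m then r ^ j / (Nat.factorial j : ℝ)
  else (r ^ m / (Nat.factorial m : ℝ)) * (r / (m : ℝ)) ^ (j - m)

/-- Blocking probability `B_{m,n}(r)` of the M/M/m/n queue with offered load `r`. -/
noncomputable def Bmn (m n : ℕ) (r : ℝ) : ℝ :=
  aCoef m n r / ∑ j ∈ Finset.range (n + 1), aCoef m j r

/-- Mean number in system `L_{m,n}(r)` of the M/M/m/n queue with offered load `r`. -/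
noncomputable def Lmn (m n : ℕ) (r : ℝ) : ℝ :=
  (∑ j ∈ Finset.range (n + 1), (j : ℝ) * aCoef m j r) /
    ∑ j ∈ Finset.range (n + 1), aCoef m j r

/-- Erlang-B formula `B_m(r)`. -/
noncomputable def erlangB (m : ℕ) (r : ℝ) : ℝ :=
  (r ^ m / (Nat.factorial m : ℝ)) / ∑ j ∈ Finset.range (m + 1), r ^ j / (Nat.factorial j : ℝ)

/-!
Write `S_n = ∑_{j ≤ n} a_j`, `T_n = ∑_{j ≤ n} j a_j` and `ρ = r / m`. Above `m` the coefficients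
are geometric, `a_{j+1} = ρ a_j`, so `D = (1 - ρ) S_n + a_{n+1}` does not depend on `n ≥ m`; it is
the denominator of the Erlang-C formula `C_m(r) = a_m / D`, and `m D = ∑_{j ≤ m} (m - j) a_j > 0`.
Over the common denominator `S_x S_{x+1}` the two differences are
`B_x - B_{x+1} = a_x D / (S_x S_{x+1})` and `L_{x+1} - L_x = a_{x+1} ((x+1) S_x - T_x) / (S_x S_{x+1})`,
so their quotient is `ρ ((x+1) S_x - T_x) / D`. Finally `(x+1) S_x - T_x` grows by `S_{x+1}` when `x`
increases, and `(1 - ρ) S_{x+1} = D - a_{x+2}`, which gives its closed form by induction on `x`.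
-/

open Finset Nat

noncomputable def aSum (m n : ℕ) (r : ℝ) : ℝ := ∑ j ∈ range (n + 1), aCoef m j r

noncomputable def aMoment (m n : ℕ) (r : ℝ) : ℝ := ∑ j ∈ range (n + 1), (j : ℝ) * aCoef m j r

noncomputable def erlangC (m : ℕ) (r : ℝ) : ℝ := m * erlangB m r / (m - r + r * erlangB m r)

noncomputable def erlangCDenom (m : ℕ) (r : ℝ) : ℝ :=
  (1 - r / m) * ∑ j ∈ range m, r ^ j / j ! + r ^ m / m !

lemma sum_range_succ_mul_pow_div_factorial (r : ℝ) (m : ℕ) :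
    ∑ j ∈ range (m + 1), (j : ℝ) * (r ^ j / j !) = r * ∑ j ∈ range m, r ^ j / j ! := by
  rw [sum_range_succ', mul_sum, Nat.cast_zero, zero_mul, add_zero]
  refine sum_congr rfl fun j _ => ?_
  rw [Nat.factorial_succ]
  push_cast
  field_simp
  ring

section

variable (m : ℕ) (r : ℝ)

lemma aCoef_of_le {j : ℕ} (h : j ≤ m) : aCoef m j r = r ^ j / j ! := if_pos h

lemma aCoef_add (k : ℕ) : aCoef m (m + k) r = r ^ m / m ! * (r / m) ^ k := by
  rcases k with _ | k
  · simp [aCoef]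
  · simp only [aCoef, if_neg (by omega : ¬m + (k + 1) ≤ m), Nat.add_sub_cancel_left]

lemma aCoef_succ_of_le {j : ℕ} (h : m ≤ j) : aCoef m (j + 1) r = r / m * aCoef m j r := by
  obtain ⟨k, rfl⟩ := Nat.exists_eq_add_of_le h
  rw [add_assoc, aCoef_add, aCoef_add, pow_succ]
  ring

lemma aCoef_nonneg (hr : 0 ≤ r) (j : ℕ) : 0 ≤ aCoef m j r := by
  unfold aCoef
  split_ifs <;> positivity

lemma aCoef_pos (hm : 0 < m) (hr : 0 < r) (j : ℕ) : 0 < aCoef m j r := by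
  unfold aCoef
  split_ifs <;> positivity

lemma aSum_pos (hr : 0 ≤ r) (n : ℕ) : 0 < aSum m n r :=
  sum_pos' (fun j _ => aCoef_nonneg m r hr j) ⟨0, by simp, by simp [aCoef]⟩

lemma aSum_succ (n : ℕ) : aSum m (n + 1) r = aSum m n r + aCoef m (n + 1) r :=
  sum_range_succ _ _

lemma aMoment_succ (n : ℕ) :
    aMoment m (n + 1) r = aMoment m n r + (n + 1) * aCoef m (n + 1) r := by
  rw [aMoment, sum_range_succ, Nat.cast_succ]
  rfl

lemma aSum_self : aSum m m r = ∑ j ∈ range m, r ^ j / j ! + r ^ m / m ! := by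
  rw [aSum, sum_range_succ, aCoef_of_le m r le_rfl]
  congr 1
  exact sum_congr rfl fun j hj => aCoef_of_le m r (mem_range.1 hj).le

lemma aMoment_self : aMoment m m r = r * ∑ j ∈ range m, r ^ j / j ! := by
  rw [aMoment, ← sum_range_succ_mul_pow_div_factorial]
  exact sum_congr rfl fun j hj => by rw [aCoef_of_le m r (mem_range_succ_iff.1 hj)]

lemma erlangB_eq : erlangB m r = r ^ m / m ! / aSum m m r := by
  rw [erlangB, aSum_self, sum_range_succ]

lemma mul_erlangCDenom (hm : m ≠ 0) :
    m * erlangCDenom m r = m * aSum m m r - aMoment m m r := by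
  rw [erlangCDenom, aSum_self, aMoment_self]
  field_simp
  ring

lemma erlangCDenom_pos (hm : 0 < m) (hr : 0 ≤ r) : 0 < erlangCDenom m r := by
  have hsum : m * aSum m m r - aMoment m m r = ∑ j ∈ range (m + 1), (m - j : ℝ) * aCoef m j r := by
    rw [aSum, aMoment, mul_sum, ← sum_sub_distrib]
    exact sum_congr rfl fun j _ => by ring
  have hpos : 0 < ∑ j ∈ range (m + 1), (m - j : ℝ) * aCoef m j r := by
    refine sum_pos' (fun j hj => mul_nonneg ?_ (aCoef_nonneg m r hr j)) ⟨0, by simp, ?_⟩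
    · have : (j : ℝ) ≤ m := by exact_mod_cast mem_range_succ_iff.1 hj
      linarith
    · simpa [aCoef] using hm
  rw [← hsum, ← mul_erlangCDenom m r hm.ne'] at hpos
  exact pos_of_mul_pos_right hpos (Nat.cast_nonneg m)

lemma sub_add_mul_erlangB (hm : m ≠ 0) (hr : 0 ≤ r) :
    m - r + r * erlangB m r = m * erlangCDenom m r / aSum m m r := by
  have hS := (aSum_pos m r hr m).ne'
  rw [erlangB_eq, mul_erlangCDenom m r hm, aMoment_self, aSum_self] at *
  generalize ∑ j ∈ range m, r ^ j / j ! = P at *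
  generalize r ^ m / m ! = A at *
  field_simp
  ring

lemma erlangC_eq (hm : 0 < m) (hr : 0 ≤ r) : erlangC m r = r ^ m / m ! / erlangCDenom m r := by
  have hS := (aSum_pos m r hr m).ne'
  have hD := (erlangCDenom_pos m r hm hr).ne'
  rw [erlangC, sub_add_mul_erlangB m r hm.ne' hr, erlangB_eq]
  field_simp

lemma one_sub_mul_aSum_add_aCoef (k : ℕ) :
    (1 - r / m) * aSum m (m + k) r + aCoef m (m + k + 1) r = erlangCDenom m r := by
  induction k with
  | zero =>
    rw [add_zero, aSum_self, aCoef_succ_of_le m r le_rfl, aCoef_of_le m r le_rfl, erlangCDenom]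
    ring
  | succ k ih =>
    rw [← add_assoc, aSum_succ, aCoef_succ_of_le m r (j := m + k + 1) (by omega), ← ih]
    ring

lemma sub_one_sq_mul_succ_mul_aSum_sub_aMoment (hm : m ≠ 0) (k : ℕ) :
    (r / m - 1) ^ 2 * ((m + k + 1) * aSum m (m + k) r - aMoment m (m + k) r) =
      r / m * (r ^ m / m !) * ((r / m) ^ (k + 1) - 1) -
        (m + k + 1 - r) * (r / m - 1) * erlangCDenom m r := by
  induction k with
  | zero =>
    rw [add_zero, aSum_self, aMoment_self, erlangCDenom]
    generalize ∑ j ∈ range m, r ^ j / j ! = P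
    generalize r ^ m / m ! = A
    -- `linear_combination` treats `r / m` as an atom; `hρ` ties it back to `r`.
    have hρ : r / m * m = r := div_mul_cancel₀ r (by exact_mod_cast hm)
    linear_combination (r / m - 1) * A * hρ
  | succ k ih =>
    have hD := one_sub_mul_aSum_add_aCoef m r (k + 1)
    rw [← add_assoc, aSum_succ, aCoef_succ_of_le m r (j := m + k + 1) (by omega)] at hD
    rw [← add_assoc, aSum_succ, aMoment_succ]
    rw [show m + k + 1 = m + (k + 1) from rfl, aCoef_add] at hD ⊢
    push_cast
    linear_combination ih - (r / m - 1) * hD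

lemma Bmn_sub_Bmn_succ (hr : 0 ≤ r) (k : ℕ) :
    Bmn m (m + k) r - Bmn m (m + k + 1) r =
      aCoef m (m + k) r * erlangCDenom m r / (aSum m (m + k) r * aSum m (m + k + 1) r) := by
  change aCoef m (m + k) r / aSum m (m + k) r - aCoef m (m + k + 1) r / aSum m (m + k + 1) r = _
  rw [div_sub_div _ _ (aSum_pos m r hr _).ne' (aSum_pos m r hr _).ne',
    ← one_sub_mul_aSum_add_aCoef m r k]
  congr 1
  rw [aSum_succ, aCoef_succ_of_le m r (Nat.le_add_right m k)]
  ring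

lemma Lmn_succ_sub_Lmn (hr : 0 ≤ r) (n : ℕ) :
    Lmn m (n + 1) r - Lmn m n r =
      aCoef m (n + 1) r * ((n + 1) * aSum m n r - aMoment m n r) /
        (aSum m n r * aSum m (n + 1) r) := by
  change aMoment m (n + 1) r / aSum m (n + 1) r - aMoment m n r / aSum m n r = _
  rw [div_sub_div _ _ (aSum_pos m r hr _).ne' (aSum_pos m r hr _).ne', aMoment_succ, aSum_succ]
  ring

end

/-- closed formula for the second-order RB index when `x ≥ m` and `ρ ≠ 1`. -/
theorem stmt_2 (m x : ℕ) (hm : 1 ≤ m) (hx : m ≤ x) (μ r : ℝ) (hμ : 0 < μ) (hr : 0 < r)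
    (hrm : r ≠ (m : ℝ)) (lam ρ : ℝ) (hlam : lam = r * μ) (hρ : ρ = r / (m : ℝ)) :
    0 < Bmn m x r - Bmn m (x + 1) r ∧
    (m : ℝ) - r + r * erlangB m r ≠ 0 ∧
    (1 / lam) * (Lmn m (x + 1) r - Lmn m x r) / (Bmn m x r - Bmn m (x + 1) r) =
      ρ * ((m : ℝ) * erlangB m r / ((m : ℝ) - r + r * erlangB m r)) * (ρ ^ (x - m + 1) - 1) /
          ((m : ℝ) * μ * (ρ - 1) ^ 2)
        - ((x : ℝ) + 1 - r) / ((m : ℝ) * μ * (ρ - 1)) := by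
  obtain ⟨k, rfl⟩ := Nat.exists_eq_add_of_le hx
  subst hlam hρ
  have hρ1 : r / m - 1 ≠ 0 := by
    rwa [sub_ne_zero, ne_eq, div_eq_one_iff_eq (by positivity)]
  have hD := erlangCDenom_pos m r hm hr.le
  have ha := aCoef_pos m r hm hr (m + k)
  have hSm := aSum_pos m r hr.le m
  have hSx := aSum_pos m r hr.le (m + k)
  have hSx' := aSum_pos m r hr.le (m + k + 1)
  have hC : (m : ℝ) * erlangB m r / (m - r + r * erlangB m r) = r ^ m / m ! / erlangCDenom m r :=
    erlangC_eq m r hm hr.le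
  have hQ := sub_one_sq_mul_succ_mul_aSum_sub_aMoment m r (by omega) k
  rw [Bmn_sub_Bmn_succ m r hr.le, hC, sub_add_mul_erlangB m r (by omega) hr.le,
    Lmn_succ_sub_Lmn m r hr.le, aCoef_succ_of_le m r (Nat.le_add_right m k),
    Nat.add_sub_cancel_left]
  refine ⟨by positivity, by positivity, ?_⟩
  push_cast
  field_simp at hQ ⊢
  linear_combination hQ
end

section
/- Let K ≥ 1 be an integer, λ > 0 a real, m ≥ 1 and n ≥ m integers, and μ_1,…,μ_K > 0 reals. Consider minimizing ∑_{k=1}^K φ_k(λ_k) over vectors (λ_1,…,λ_K) with λ_k ∈ [0,λ] for each k and ∑_{k=1}^K λ_k = λ, where φ_k(0) = 0 and φ_k(t) = t·B_{m,n}(t/μ_k) for t > 0. Then the unique minimizer is given by λ_k* = λ·μ_k / (∑_{l=1}^K μ_l) for each k; in particular, all queues have the same offered load λ_k*/μ_k = λ/∑_{l=1}^K μ_l. -/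
/-
Write `g(x) = x·B_{m,n}(x)`, so that `φ_k(t) = μ_k·g(t/μ_k)`. The objective is a sum of
perspectives of `g`, hence by Jensen's inequality with weights `μ_k/∑μ` it is at least
`(∑μ)·g(λ/∑μ)`, with equality only when all loads `λ_k/μ_k` coincide, as soon as `g` is strictly
convex on `[0, ∞)`.

For convexity, `g(x) = c_n x^{n+1} / ∑_{j≤n} c_j x^j` with the log-concave coefficients
`c_j = a_j(1)` (their ratios are `1/min(j+1, m)`). With `q_j = c_j x^j` the sign of `g''(x)` is that
of `n(n+1)M₀² − (2n+1)M₀M₁ + 2M₁² − M₀M₂`, `M_k = ∑ j^k q_j`. Abel summation rewrites this as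
`2((∑_{t<n} S_t)² − S_n ∑_{t<n} (n−1−t) S_t)` for the partial sums `S_t` of `q`, which are again
log-concave, and pairing `S_n S_t ≤ S_a S_{n−a+t}` (for `t < a < n`) proves it positive.
-/

open Finset

section LogConcave

variable {q : ℕ → ℝ}

theorem mul_le_mul_succ_of_logConcave (hpos : ∀ i, 0 < q i)
    (hlc : ∀ i, q i * q (i + 2) ≤ q (i + 1) ^ 2) {i k : ℕ} (hik : i ≤ k) :
    q (k + 1) * q i ≤ q (i + 1) * q k := by
  induction k, hik using Nat.le_induction with
  | base => rw [mul_comm]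
  | succ k _ ih =>
    have := mul_le_mul_of_nonneg_left ih (hpos (k + 1)).le
    nlinarith [hlc k, hpos i, hpos k, hpos (k + 1), hpos (i + 1)]

theorem mul_le_mul_of_logConcave (hpos : ∀ i, 0 < q i)
    (hlc : ∀ i, q i * q (i + 2) ≤ q (i + 1) ^ 2) {i j a b : ℕ} (hia : i ≤ a) (hib : i ≤ b)
    (h : a + b = i + j) : q i * q j ≤ q a * q b := by
  wlog hab : a ≤ b generalizing a b
  · rw [mul_comm (q a)]
    exact this hib hia (by omega) (by omega)
  clear hib
  induction a, hia using Nat.le_induction generalizing b with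
  | base =>
    obtain rfl : b = j := by omega
    exact le_rfl
  | succ a _ ih =>
    calc q i * q j ≤ q a * q (b + 1) := ih (by omega) (by omega)
      _ ≤ q (a + 1) * q b := by
        rw [mul_comm]; exact mul_le_mul_succ_of_logConcave hpos hlc (by omega)

theorem partialSum_pos (hpos : ∀ i, 0 < q i) (t : ℕ) : 0 < ∑ k ∈ range (t + 1), q k :=
  sum_pos (fun i _ => hpos i) nonempty_range_add_one

theorem logConcave_partialSum (hpos : ∀ i, 0 < q i)
    (hlc : ∀ i, q i * q (i + 2) ≤ q (i + 1) ^ 2) (t : ℕ) :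
    (∑ k ∈ range (t + 1), q k) * ∑ k ∈ range (t + 3), q k ≤ (∑ k ∈ range (t + 2), q k) ^ 2 := by
  have hshift : (∑ k ∈ range (t + 1), q k) * q (t + 2) ≤
      (∑ k ∈ range (t + 1), q (k + 1)) * q (t + 1) := by
    rw [sum_mul, sum_mul]
    exact sum_le_sum fun k hk => by
      rw [mul_comm (q k)]
      exact mul_le_mul_succ_of_logConcave (i := k) (k := t + 1) hpos hlc (by
        have := mem_range.1 hk; omega)
  have hsplit := sum_range_succ' q (t + 1)
  rw [sum_range_succ _ (t + 2)]
  rw [sum_range_succ _ (t + 1)] at hsplit ⊢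
  nlinarith [hpos 0, hpos (t + 1)]

theorem mul_sum_sum_lt_sq_of_logConcave (hpos : ∀ i, 0 < q i)
    (hlc : ∀ i, q i * q (i + 2) ≤ q (i + 1) ^ 2) {n : ℕ} (hn : 1 ≤ n) :
    q n * ∑ a ∈ range n, ∑ t ∈ range a, q t < (∑ t ∈ range n, q t) ^ 2 := by
  rw [sq, sum_mul_sum, mul_sum]
  refine sum_lt_sum (fun a ha => ?_) ⟨0, mem_range.2 hn, ?_⟩
  · have ha := mem_range.1 ha
    calc q n * ∑ t ∈ range a, q t = ∑ t ∈ range a, q n * q t := mul_sum _ _ _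
      _ ≤ ∑ t ∈ range a, q a * q (n - a + t) := sum_le_sum fun t ht => by
        rw [mul_comm]
        exact mul_le_mul_of_logConcave hpos hlc (by have := mem_range.1 ht; omega) (by omega)
          (by omega)
      _ = ∑ b ∈ Ico (n - a) n, q a * q b := by
        rw [sum_Ico_eq_sum_range, show n - (n - a) = a by omega]
      _ ≤ ∑ b ∈ range n, q a * q b :=
        sum_le_sum_of_subset_of_nonneg (fun b hb => mem_range.2 (mem_Ico.1 hb).2)
          fun b _ _ => (mul_pos (hpos a) (hpos b)).le
  · simpa using sum_pos (fun b _ => mul_pos (hpos 0) (hpos b)) (nonempty_range_iff.2 (by omega))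

theorem sum_range_succ_mul_by_parts (f : ℕ → ℝ) (n : ℕ) :
    ∑ j ∈ range (n + 1), f j * q j = f n * ∑ j ∈ range (n + 1), q j -
      ∑ t ∈ range n, (f (t + 1) - f t) * ∑ j ∈ range (t + 1), q j := by
  induction n with
  | zero => simp
  | succ n ih =>
    rw [sum_range_succ _ (n + 1), ih, sum_range_succ q (n + 1),
      sum_range_succ (fun t => (f (t + 1) - f t) * ∑ j ∈ range (t + 1), q j) n]
    ring

theorem sum_range_sum_range (n : ℕ) :
    ∑ a ∈ range n, ∑ t ∈ range a, q t = ∑ t ∈ range n, ((n : ℝ) - 1 - t) * q t := by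
  induction n with
  | zero => simp
  | succ n ih =>
    rw [sum_range_succ, ih, sum_range_succ _ n, ← sum_add_distrib]
    push_cast
    ring_nf

theorem moment_ineq_of_logConcave (hpos : ∀ i, 0 < q i)
    (hlc : ∀ i, q i * q (i + 2) ≤ q (i + 1) ^ 2) {n : ℕ} (hn : 1 ≤ n) :
    (∑ j ∈ range (n + 1), q j) * ∑ j ∈ range (n + 1), (j : ℝ) ^ 2 * q j <
      n * (n + 1) * (∑ j ∈ range (n + 1), q j) ^ 2 -
        (2 * n + 1) * (∑ j ∈ range (n + 1), q j) * (∑ j ∈ range (n + 1), (j : ℝ) * q j) +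
        2 * (∑ j ∈ range (n + 1), (j : ℝ) * q j) ^ 2 := by
  set S : ℕ → ℝ := fun t => ∑ j ∈ range (t + 1), q j
  have hkey := mul_sum_sum_lt_sq_of_logConcave (q := S) (partialSum_pos hpos)
    (logConcave_partialSum hpos hlc) hn
  rw [sum_range_sum_range] at hkey
  have h1 := sum_range_succ_mul_by_parts (q := q) (fun j => (j : ℝ)) n
  have h2 := sum_range_succ_mul_by_parts (q := q) (fun j => (j : ℝ) ^ 2) n
  have hW : ∑ t ∈ range n, (((t + 1 : ℕ) : ℝ) ^ 2 - (t : ℝ) ^ 2) * S t =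
      (2 * n - 1) * ∑ t ∈ range n, S t - 2 * ∑ t ∈ range n, ((n : ℝ) - 1 - t) * S t := by
    rw [mul_sum, mul_sum, ← sum_sub_distrib]
    exact sum_congr rfl fun t _ => by push_cast; ring
  simp only [Nat.cast_add_one, add_sub_cancel_left, one_mul] at h1
  rw [hW] at h2
  rw [h1, h2]
  linear_combination 2 * hkey

end LogConcave

noncomputable def powSum (c : ℕ → ℝ) (n : ℕ) (x : ℝ) : ℝ := ∑ j ∈ range (n + 1), c j * x ^ j

noncomputable def lostTraffic (c : ℕ → ℝ) (n : ℕ) (x : ℝ) : ℝ := c n * x ^ (n + 1) / powSum c n x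

section PowSum

variable (c : ℕ → ℝ) (n : ℕ) {x : ℝ}

theorem hasDerivAt_pow_of_ne_zero (k : ℕ) (hx : x ≠ 0) :
    HasDerivAt (· ^ k) (k * x ^ k / x) x := by
  refine (hasDerivAt_pow k x).congr_deriv ?_
  rcases k with _ | k
  · simp
  · rw [Nat.add_sub_cancel, pow_succ]
    field_simp

theorem hasDerivAt_powSum (hx : x ≠ 0) :
    HasDerivAt (powSum c n) (powSum (fun j => j * c j) n x / x) x := by
  refine (HasDerivAt.fun_sum (u := range (n + 1)) fun j _ =>
    (hasDerivAt_pow_of_ne_zero j hx).const_mul (c j)).congr_deriv ?_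
  rw [powSum, sum_div]
  exact sum_congr rfl fun j _ => by ring

theorem continuous_powSum : Continuous (powSum c n) := by
  unfold powSum
  fun_prop

variable {c}

theorem powSum_pos (hc : ∀ j, 0 < c j) (hx : 0 ≤ x) : 0 < powSum c n x :=
  sum_pos' (fun j _ => mul_nonneg (hc j).le (pow_nonneg hx j))
    ⟨0, by simp, by simpa using hc 0⟩

theorem hasDerivAt_lostTraffic (hx : x ≠ 0) (hP : powSum c n x ≠ 0) :
    HasDerivAt (lostTraffic c n) (c n * x ^ n *
      ((n + 1) * powSum c n x - powSum (fun j => j * c j) n x) / powSum c n x ^ 2) x := by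
  refine (((hasDerivAt_pow_of_ne_zero (n + 1) hx).const_mul (c n)).div
    (hasDerivAt_powSum c n hx) hP).congr_deriv ?_
  field_simp
  push_cast
  ring

theorem hasDerivAt_deriv_lostTraffic (hc : ∀ j, 0 < c j) (hx : 0 < x) :
    HasDerivAt (deriv (lostTraffic c n)) (c n * x ^ n *
      (n * (n + 1) * powSum c n x ^ 2 -
        (2 * n + 1) * powSum c n x * powSum (fun j => j * c j) n x +
        2 * powSum (fun j => j * c j) n x ^ 2 -
        powSum c n x * powSum (fun j => j * (j * c j)) n x) / (x * powSum c n x ^ 3)) x := by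
  have hderiv : deriv (lostTraffic c n) =ᶠ[nhds x] fun y => c n * y ^ n *
      ((n + 1) * powSum c n y - powSum (fun j => j * c j) n y) / powSum c n y ^ 2 :=
    Filter.eventually_of_mem (Ioi_mem_nhds hx) fun y (hy : 0 < y) =>
      (hasDerivAt_lostTraffic n hy.ne' (powSum_pos n hc hy.le).ne').deriv
  have hP := (powSum_pos n hc hx.le).ne'
  refine HasDerivAt.congr_of_eventuallyEq ?_ hderiv
  refine ((((hasDerivAt_pow_of_ne_zero n hx.ne').const_mul (c n)).mul
    (((hasDerivAt_powSum c n hx.ne').const_mul ((n : ℝ) + 1)).sub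
      (hasDerivAt_powSum (fun j => j * c j) n hx.ne'))).div
    ((hasDerivAt_powSum c n hx.ne').pow 2) (pow_ne_zero 2 hP)).congr_deriv ?_
  simp only [Pi.pow_apply, Pi.sub_apply, Pi.mul_apply]
  field_simp
  push_cast
  ring

end PowSum

theorem strictConvexOn_lostTraffic {c : ℕ → ℝ} {n : ℕ} (hc : ∀ j, 0 < c j)
    (hlc : ∀ j, c j * c (j + 2) ≤ c (j + 1) ^ 2) (hn : 1 ≤ n) :
    StrictConvexOn ℝ (Set.Ici 0) (lostTraffic c n) := by
  have hcont : ContinuousOn (lostTraffic c n) (Set.Ici 0) :=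
    (continuous_const.mul (continuous_pow _)).continuousOn.div
      (continuous_powSum c n).continuousOn fun x hx => (powSum_pos n hc hx).ne'
  refine strictConvexOn_of_deriv2_pos (convex_Ici (0 : ℝ)) hcont fun x hx => ?_
  rw [interior_Ici] at hx
  have hx : 0 < x := hx
  set q : ℕ → ℝ := fun j => c j * x ^ j
  have hq : ∀ j, 0 < q j := fun j => mul_pos (hc j) (pow_pos hx j)
  have hqlc : ∀ j, q j * q (j + 2) ≤ q (j + 1) ^ 2 := fun j =>
    calc q j * q (j + 2) = c j * c (j + 2) * (x ^ (j + 1)) ^ 2 := by ring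
      _ ≤ c (j + 1) ^ 2 * (x ^ (j + 1)) ^ 2 := by gcongr; exact hlc j
      _ = q (j + 1) ^ 2 := by ring
  have h1 : powSum (fun j => j * c j) n x = ∑ j ∈ range (n + 1), (j : ℝ) * q j :=
    sum_congr rfl fun j _ => mul_assoc _ _ _
  have h2 : powSum (fun j => j * (j * c j)) n x = ∑ j ∈ range (n + 1), (j : ℝ) ^ 2 * q j :=
    sum_congr rfl fun j _ => by ring
  have h0 : powSum c n x = ∑ j ∈ range (n + 1), q j := rfl
  have hmoment := moment_ineq_of_logConcave hq hqlc hn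
  have hP := powSum_pos n hc hx.le
  show 0 < deriv (deriv (lostTraffic c n)) x
  rw [(hasDerivAt_deriv_lostTraffic n hc hx).deriv]
  refine div_pos (mul_pos (mul_pos (hc n) (pow_pos hx n)) ?_) (mul_pos hx (pow_pos hP 3))
  rw [h1, h2, h0]
  linarith

theorem aCoef_eq_mul_pow (m j : ℕ) (r : ℝ) : aCoef m j r = aCoef m j 1 * r ^ j := by
  unfold aCoef
  split_ifs with h
  · ring
  · have hpow : r ^ j = r ^ m * r ^ (j - m) := by rw [← pow_add, Nat.add_sub_cancel' (by omega)]
    rw [hpow, div_pow, div_pow]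
    ring

theorem aCoef_one_pos {m : ℕ} (hm : 1 ≤ m) (j : ℕ) : 0 < aCoef m j 1 := by
  have : (0 : ℝ) < m := by exact_mod_cast hm
  unfold aCoef
  split_ifs <;> positivity

theorem aCoef_one_succ {m : ℕ} (hm : 1 ≤ m) (j : ℕ) :
    aCoef m (j + 1) 1 = aCoef m j 1 / min ((j + 1 : ℕ) : ℝ) m := by
  have hm' : (0 : ℝ) < m := by exact_mod_cast hm
  unfold aCoef
  simp only [one_pow]
  rcases lt_trichotomy j m with h | rfl | h
  · rw [if_pos (show j + 1 ≤ m by omega), if_pos h.le, min_eq_left (by exact_mod_cast h),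
      Nat.factorial_succ]
    push_cast
    field_simp
  · rw [if_neg (by omega), if_pos le_rfl, min_eq_right (by simp), Nat.add_sub_cancel_left]
    field_simp
  · rw [if_neg (by omega), if_neg (by omega),
      min_eq_right (by exact_mod_cast h.le.trans (by omega)), Nat.sub_add_comm h.le, pow_succ]
    field_simp

theorem aCoef_one_logConcave {m : ℕ} (hm : 1 ≤ m) (j : ℕ) :
    aCoef m j 1 * aCoef m (j + 2) 1 ≤ aCoef m (j + 1) 1 ^ 2 := by
  have hm' : (0 : ℝ) < m := by exact_mod_cast hm
  have hmin : 0 < min ((j + 1 : ℕ) : ℝ) m := lt_min (by positivity) hm'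
  have hmin_le : min ((j + 1 : ℕ) : ℝ) m ≤ min ((j + 1 + 1 : ℕ) : ℝ) m := by gcongr; omega
  have hc := aCoef_one_pos hm j
  rw [aCoef_one_succ hm (j + 1), aCoef_one_succ hm j, div_div, sq, mul_div_assoc',
    div_mul_div_comm]
  gcongr

theorem mul_Bmn_eq_lostTraffic (m n : ℕ) (r : ℝ) :
    r * Bmn m n r = lostTraffic (fun j => aCoef m j 1) n r := by
  simp only [Bmn, lostTraffic, powSum, aCoef_eq_mul_pow m _ r]
  ring

section Perspective

variable {ι : Type*} [Fintype ι] {f : ℝ → ℝ} {μ w : ι → ℝ}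

theorem sum_div_sum_smul_div (hμ : ∀ i, 0 < μ i) (a : ι → ℝ) :
    ∑ i, (μ i / ∑ j, μ j) • (a i / μ i) = (∑ i, a i) / ∑ j, μ j := by
  rw [sum_div]
  exact sum_congr rfl fun i _ => by rw [smul_eq_mul]; field_simp [(hμ i).ne']

theorem proportional_mem_Icc (hμ : ∀ i, 0 < μ i) {s : ℝ} (hs : 0 ≤ s) (i : ι) :
    s * μ i / ∑ j, μ j ∈ Set.Icc 0 s := by
  have hT : 0 < ∑ j, μ j := sum_pos (fun j _ => hμ j) ⟨i, mem_univ i⟩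
  refine ⟨div_nonneg (mul_nonneg hs (hμ i).le) hT.le, div_le_of_le_mul₀ hT.le hs ?_⟩
  exact mul_le_mul_of_nonneg_left (single_le_sum (fun j _ => (hμ j).le) (mem_univ i)) hs

theorem sum_proportional (hT : ∑ j, μ j ≠ 0) (s : ℝ) : ∑ i, s * μ i / ∑ j, μ j = s := by
  rw [← sum_div, ← mul_sum, mul_div_cancel_right₀ _ hT]

theorem ConvexOn.sum_mul_map_div_sum_le (hf : ConvexOn ℝ (Set.Ici 0) f) (hμ : ∀ i, 0 < μ i)
    (hw : ∀ i, 0 ≤ w i) :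
    (∑ i, μ i) * f ((∑ i, w i) / ∑ i, μ i) ≤ ∑ i, μ i * f (w i / μ i) := by
  rcases isEmpty_or_nonempty ι with hι | hι
  · simp
  have hT : 0 < ∑ i, μ i := sum_pos (fun i _ => hμ i) univ_nonempty
  have hjensen := hf.map_sum_le (t := univ) (w := fun i => μ i / ∑ j, μ j)
    (fun i _ => (div_pos (hμ i) hT).le) (by rw [← sum_div, div_self hT.ne'])
    (fun i _ => div_nonneg (hw i) (hμ i).le)
  rw [sum_div_sum_smul_div hμ] at hjensen
  simp only [smul_eq_mul, div_mul_eq_mul_div, ← sum_div] at hjensen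
  rwa [le_div_iff₀' hT] at hjensen

theorem StrictConvexOn.eq_of_sum_mul_map_div_le (hf : StrictConvexOn ℝ (Set.Ici 0) f)
    (hμ : ∀ i, 0 < μ i) (hw : ∀ i, 0 ≤ w i)
    (h : ∑ i, μ i * f (w i / μ i) ≤ (∑ i, μ i) * f ((∑ i, w i) / ∑ i, μ i)) (i : ι) :
    w i = (∑ j, w j) * μ i / ∑ j, μ j := by
  have hT : 0 < ∑ i, μ i := sum_pos (fun i _ => hμ i) ⟨i, mem_univ i⟩
  have hequal := hf.eq_of_le_map_sum (t := univ) (w := fun i => μ i / ∑ j, μ j)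
    (fun i _ => div_pos (hμ i) hT) (by rw [← sum_div, div_self hT.ne'])
    (fun i _ => div_nonneg (hw i) (hμ i).le) (by
      rw [sum_div_sum_smul_div hμ]
      simp only [smul_eq_mul, div_mul_eq_mul_div, ← sum_div]
      rwa [div_le_iff₀' hT])
  have hsum : ∑ j, w j = w i / μ i * ∑ j, μ j := by
    rw [mul_sum]
    refine sum_congr rfl fun j _ => ?_
    rw [← hequal (mem_univ j) (mem_univ i)]
    field_simp [(hμ j).ne']
  rw [hsum]
  field_simp [(hμ i).ne']

end Perspective

/-- with equal buffer and server-pool sizes, the OBS equalizes offered loads. -/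
theorem stmt_12 (K : ℕ) (hK : 1 ≤ K) (lam : ℝ) (hlam : 0 < lam)
    (m n : ℕ) (hm : 1 ≤ m) (hn : m ≤ n) (μ : Fin K → ℝ) (hμ : ∀ k, 0 < μ k)
    (φ : Fin K → ℝ → ℝ) (hφ0 : ∀ k, φ k 0 = 0)
    (hφ : ∀ k, ∀ t : ℝ, 0 < t → φ k t = t * Bmn m n (t / μ k))
    (v : Fin K → ℝ) (hv : ∀ k, v k = lam * μ k / ∑ l, μ l) :
    (((∀ k, v k ∈ Set.Icc (0 : ℝ) lam) ∧ ∑ k, v k = lam) ∧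
      ∀ w : Fin K → ℝ, ((∀ k, w k ∈ Set.Icc (0 : ℝ) lam) ∧ ∑ k, w k = lam) →
        ∑ k, φ k (v k) ≤ ∑ k, φ k (w k)) ∧
    (∀ w : Fin K → ℝ, ((∀ k, w k ∈ Set.Icc (0 : ℝ) lam) ∧ ∑ k, w k = lam) →
      (∀ u : Fin K → ℝ, ((∀ k, u k ∈ Set.Icc (0 : ℝ) lam) ∧ ∑ k, u k = lam) →
        ∑ k, φ k (w k) ≤ ∑ k, φ k (u k)) → w = v) ∧
    (∀ k, v k / μ k = lam / ∑ l, μ l) := by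
  set g := lostTraffic (fun j => aCoef m j 1) n
  have hg : StrictConvexOn ℝ (Set.Ici 0) g :=
    strictConvexOn_lostTraffic (aCoef_one_pos hm) (aCoef_one_logConcave hm) (hm.trans hn)
  have hT : 0 < ∑ l, μ l := sum_pos (fun l _ => hμ l) ⟨⟨0, hK⟩, mem_univ _⟩
  have hφg : ∀ k t, 0 ≤ t → φ k t = μ k * g (t / μ k) := by
    intro k t ht
    rcases ht.eq_or_lt with rfl | ht
    · simp [hφ0, g, lostTraffic]
    · rw [hφ k t ht, show g (t / μ k) = _ from (mul_Bmn_eq_lostTraffic m n _).symm,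
        ← mul_assoc, mul_div_cancel₀ _ (hμ k).ne']
  have hvμ : ∀ k, v k / μ k = lam / ∑ l, μ l := fun k => by
    rw [hv k]; field_simp [(hμ k).ne']
  have hv_mem : ∀ k, v k ∈ Set.Icc 0 lam := fun k => hv k ▸ proportional_mem_Icc hμ hlam.le k
  have hv_sum : ∑ k, v k = lam := by simp only [hv, sum_proportional hT.ne']
  have hcost : ∀ w : Fin K → ℝ, (∀ k, w k ∈ Set.Icc 0 lam) →
      ∑ k, φ k (w k) = ∑ k, μ k * g (w k / μ k) := fun w hw =>
    sum_congr rfl fun k _ => hφg k (w k) (hw k).1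
  have hv_cost : ∑ k, φ k (v k) = (∑ l, μ l) * g (lam / ∑ l, μ l) := by
    simp only [hcost v hv_mem, hvμ, ← sum_mul]
  refine ⟨⟨⟨hv_mem, hv_sum⟩, fun w hw => ?_⟩, fun w hw hmin => ?_, hvμ⟩
  · rw [hv_cost, hcost w hw.1, ← hw.2]
    exact hg.convexOn.sum_mul_map_div_sum_le hμ fun k => (hw.1 k).1
  · funext k
    rw [hv k, ← hw.2]
    refine hg.eq_of_sum_mul_map_div_le hμ (fun k => (hw.1 k).1) ?_ k
    rw [← hcost w hw.1, hw.2, ← hv_cost]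
    exact hmin v ⟨hv_mem, hv_sum⟩
end
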